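/- arXiv:2310.19393 — 6 statements merged into one kernel-verified Lean document; each statement's English description precedes it below -/
import Mathlib

section
/- For all integers m ≥ 1, i with m ≤ i, and k ≥ 0, the identity ∑_{l=m-1}^{i-1} (-1)^{i-1-l} C(i-m, i-1-l) C(l+k, m-1) = C(m+k-1, 2m-1-i) holds, where C(n,j) denotes the binomial coefficient with the convention C(n,j) = 0 for j < 0 or j > n. -/
/-!
Substituting `l = m - 1 + t` turns the left side into the `(i - m)`-th forward difference of
`x ↦ C(x, m - 1)` at `x = m + k - 1`. Since `Δ C(x, j + 1) = C(x, j)`, that difference is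
`C(x, 2m - 1 - i)`, read as `0` once `i - m` exceeds `m - 1`.
-/

/-- Extended binomial coefficient: `C n j = 0` when `j < 0` or `j > n`. -/
noncomputable def extChoose (n j : ℤ) : ℤ :=
  if 0 ≤ j ∧ j ≤ n then (Nat.choose n.toNat j.toNat : ℤ) else 0

open Finset fwdDiff

theorem extChoose_natCast (a j : ℕ) : extChoose a j = a.choose j := by
  by_cases h : j ≤ a
  · simp [extChoose, h]
  · simp [extChoose, Nat.choose_eq_zero_of_lt (not_le.mp h), h]

theorem extChoose_of_neg (a : ℤ) {j : ℤ} (hj : j < 0) : extChoose a j = 0 := by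
  simp [extChoose, not_le.mpr hj]

theorem fwdDiff_iter_choose_eq_extChoose (M n x : ℕ) :
    (Δ_[1])^[n] (fun y ↦ y.choose M : ℕ → ℤ) x = extChoose x ((M : ℤ) - n) := by
  rcases le_or_gt n M with hnM | hMn
  · obtain ⟨j, rfl⟩ := Nat.exists_eq_add_of_le hnM
    rw [fwdDiff_iter_choose, show ((n + j : ℕ) : ℤ) - n = j by push_cast; ring, extChoose_natCast]
  · obtain ⟨r, rfl⟩ := Nat.exists_eq_add_of_lt hMn
    have hconst : (Δ_[1])^[M] (fun y ↦ y.choose M : ℕ → ℤ) = fun _ ↦ 1 := by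
      simpa using fwdDiff_iter_choose 0 M
    have hzero : (Δ_[1])^[M + 1] (fun y ↦ y.choose M : ℕ → ℤ) = fun _ ↦ 0 := by
      rw [Function.iterate_succ_apply', hconst, fwdDiff_const]
    rw [show M + r + 1 = r + (M + 1) by ring, Function.iterate_add_apply, hzero,
      Function.iterate_fixed (fwdDiff_const (1 : ℕ) (0 : ℤ)),
      extChoose_of_neg _ (by omega)]

theorem sum_alternating_choose_mul_choose_add (M n x : ℕ) :
    ∑ t ∈ range (n + 1), (-1 : ℤ) ^ (n - t) * n.choose t * (x + t).choose M
      = extChoose x ((M : ℤ) - n) := by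
  rw [← fwdDiff_iter_choose_eq_extChoose, fwdDiff_iter_eq_sum_shift]
  simp

theorem stmt0 (m i k : ℤ) (hm : 1 ≤ m) (hi : m ≤ i) (hk : 0 ≤ k) :
    ∑ l ∈ Finset.Icc (m - 1) (i - 1),
      (-1 : ℤ) ^ (i - 1 - l).toNat * extChoose (i - m) (i - 1 - l) * extChoose (l + k) (m - 1)
      = extChoose (m + k - 1) (2 * m - 1 - i) := by
  obtain ⟨M, rfl⟩ : ∃ M : ℕ, m = M + 1 := ⟨(m - 1).toNat, by omega⟩
  obtain ⟨n, rfl⟩ : ∃ n : ℕ, i = M + 1 + n := ⟨(i - (M + 1)).toNat, by omega⟩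
  lift k to ℕ using hk
  have hlen : ((M + 1 + n : ℤ) - 1 + 1 - (M + 1 - 1)).toNat = n + 1 := by omega
  rw [Int.Icc_eq_finset_map, hlen, Finset.sum_map]
  convert sum_alternating_choose_mul_choose_add M n (M + k) using 1
  · refine Finset.sum_congr rfl fun t ht ↦ ?_
    have htn : t ≤ n := Nat.lt_succ_iff.mp (Finset.mem_range.mp ht)
    simp only [Function.Embedding.trans_apply, Nat.castEmbedding_apply, addLeftEmbedding_apply]
    rw [show (M + 1 + n : ℤ) - 1 - (M + 1 - 1 + t) = (n - t : ℕ) by omega,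
      show (M + 1 + n : ℤ) - (M + 1) = n by ring,
      show (M + 1 - 1 + t + k : ℤ) = (M + k + t : ℕ) by push_cast; ring,
      show (M + 1 - 1 : ℤ) = M by ring, Int.toNat_natCast, extChoose_natCast, extChoose_natCast,
      Nat.choose_symm htn]
  · rw [show (M + 1 + k - 1 : ℤ) = (M + k : ℕ) by push_cast; ring]
    congr 1
    ring
end

section
/- Let H be a Hilbert space, T a bounded operator on H, and suppose Δ = T*T − I satisfies Δ = ∑_{i=1}^∞ c_i (k_i ⊗ k_i) (convergence in the strong operator topology) where c_i > 0, the k_i are vectors in H, and T* k_i = conj(λ_i) k_i with λ_i in the closed unit disc. Then for every n ≥ 2, ∑_{j=0}^{n} (-1)^j C(n,j) T*^j T^j = −∑_{i=1}^∞ c_i (1−|λ_i|²)^{n-1} (k_i ⊗ k_i), and in particular this operator is negative semidefinite. -/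
/-!
Write `β n = ∑ j ≤ n, (-1)^j C(n,j) T*^j T^j`. Pascal's rule gives `β (n+1) = β n - T* (β n) T`,
and `T* (k ⊗ k) T = |λ|² (k ⊗ k)` whenever `T* k = conj λ • k`. So if `-β n = ∑ wᵢ kᵢ ⊗ kᵢ`
strongly, then `-β (n+1) = ∑ wᵢ (1 - |λᵢ|²) kᵢ ⊗ kᵢ` strongly; starting from `-β 1 = T*T - 1 = Δ`
this gives the formula. Since `⟨x, (k ⊗ k) x⟩ = |⟨k, x⟩|²` and all weights are nonnegative,
`-β n` is positive semidefinite.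
-/

open ContinuousLinearMap Filter Finset

/-- The rank-one operator `x ↦ ⟨x, k⟩ k` (inner product linear in the first slot,
i.e. `x ↦ ⟪k, x⟫_ℂ • k` in Mathlib's convention). -/
noncomputable def rankOne {H : Type*} [NormedAddCommGroup H] [InnerProductSpace ℂ H]
    (k : H) : H →L[ℂ] H :=
  (ContinuousLinearMap.toSpanSingleton ℂ k).comp (innerSL ℂ k)

section BinomialDefect

variable (R : Type*) {A : Type*} [CommRing R] [Ring A] [Algebra R A]

def binomialDefect (a b : A) (n : ℕ) : A :=
  ∑ j ∈ range (n + 1), ((-1 : R) ^ j * (n.choose j : R)) • (a ^ j * b ^ j)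

variable {R}

lemma binomialDefect_eq_sum_nsmul (a b : A) (n : ℕ) :
    binomialDefect R a b n =
      ∑ j ∈ range (n + 1), n.choose j • ((-1 : R) ^ j • (a ^ j * b ^ j)) :=
  sum_congr rfl fun j _ => by rw [mul_comm, mul_smul, Nat.cast_smul_eq_nsmul]

lemma binomialDefect_one (a b : A) : binomialDefect R a b 1 = 1 - a * b := by
  simp [binomialDefect, sum_range_succ, sub_eq_add_neg]

lemma binomialDefect_succ (a b : A) (n : ℕ) :
    binomialDefect R a b (n + 1) = binomialDefect R a b n - a * binomialDefect R a b n * b := by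
  have hconj (j : ℕ) : a * (a ^ j * b ^ j) * b = a ^ (j + 1) * b ^ (j + 1) := by
    rw [pow_succ', pow_succ, mul_assoc, mul_assoc, mul_assoc]
  rw [binomialDefect_eq_sum_nsmul, binomialDefect_eq_sum_nsmul,
    sum_choose_succ_nsmul (fun i _ => (-1 : R) ^ i • (a ^ i * b ^ i)), sub_eq_add_neg,
    mul_sum, sum_mul, ← sum_neg_distrib]
  congr 1
  refine sum_congr rfl fun j _ => ?_
  rw [mul_smul_comm, smul_mul_assoc, mul_smul_comm, smul_mul_assoc, hconj, pow_succ,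
    mul_neg_one, neg_smul, smul_neg]

end BinomialDefect

section RankOne

variable {H : Type*} [NormedAddCommGroup H] [InnerProductSpace ℂ H]

lemma rankOne_apply (k x : H) : rankOne k x = inner ℂ k x • k := rfl

lemma inner_rankOne_self (k x : H) : inner ℂ x (rankOne k x) = ((‖inner ℂ k x‖ ^ 2 : ℝ) : ℂ) := by
  rw [rankOne_apply, inner_smul_right, ← inner_conj_symm x k, Complex.mul_conj']
  norm_cast

lemma re_inner_nonneg_of_tendsto_sum_rankOne {ks : ℕ → H} {w : ℕ → ℝ} (hw : ∀ i, 0 ≤ w i)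
    {x y : H}
    (hy : Tendsto (fun N => ∑ i ∈ range N, (w i : ℂ) • rankOne (ks i) x) atTop (nhds y)) :
    0 ≤ (inner ℂ x y).re := by
  have hre := (Complex.continuous_re.comp (innerSL ℂ x).continuous).tendsto y |>.comp hy
  refine ge_of_tendsto' hre fun N => ?_
  simp only [Function.comp_apply, innerSL_apply_apply, inner_sum, inner_smul_right,
    inner_rankOne_self, ← Complex.ofReal_mul, ← Complex.ofReal_sum, Complex.ofReal_re]
  exact sum_nonneg fun i _ => mul_nonneg (hw i) (sq_nonneg _)

variable [CompleteSpace H]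

lemma adjoint_mul_rankOne_mul_of_adjoint_apply_eq {T : H →L[ℂ] H} {k : H} {μ : ℂ}
    (hk : adjoint T k = starRingEnd ℂ μ • k) :
    adjoint T * rankOne k * T = ((‖μ‖ ^ 2 : ℝ) : ℂ) • rankOne k := by
  ext x
  have hTx : inner ℂ k (T x) = μ * inner ℂ k x := by
    rw [← adjoint_inner_left, hk, inner_smul_left, Complex.conj_conj]
  simp only [mul_apply_eq_comp, smul_apply, rankOne_apply, map_smul, hk, hTx, smul_smul]
  rw [Complex.ofReal_pow, ← Complex.mul_conj']
  ring_nf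

lemma tendsto_sum_rankOne_one_sub_norm_sq {T : H →L[ℂ] H} {ks : ℕ → H} {lam : ℕ → ℂ}
    (heig : ∀ i, adjoint T (ks i) = starRingEnd ℂ (lam i) • ks i) {w : ℕ → ℝ} {B : H →L[ℂ] H}
    (hB : ∀ x, Tendsto (fun N => ∑ i ∈ range N, (w i : ℂ) • rankOne (ks i) x) atTop
      (nhds (B x))) (x : H) :
    Tendsto (fun N => ∑ i ∈ range N, ((w i * (1 - ‖lam i‖ ^ 2) : ℝ) : ℂ) • rankOne (ks i) x)
      atTop (nhds ((B - adjoint T * B * T) x)) := by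
  have hconj := ((adjoint T).continuous.tendsto _).comp (hB (T x))
  refine ((hB x).sub hconj).congr fun N => ?_
  simp only [Function.comp_apply, map_sum, map_smul, ← sum_sub_distrib]
  refine sum_congr rfl fun i _ => ?_
  rw [← mul_apply_eq_comp, ← mul_apply_eq_comp,
    adjoint_mul_rankOne_mul_of_adjoint_apply_eq (heig i), smul_apply, smul_smul, ← sub_smul]
  push_cast
  ring_nf

theorem tendsto_sum_rankOne_neg_binomialDefect {T : H →L[ℂ] H} {c : ℕ → ℝ} {ks : ℕ → H}
    {lam : ℕ → ℂ} (heig : ∀ i, adjoint T (ks i) = starRingEnd ℂ (lam i) • ks i)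
    (hΔ : ∀ x : H, Tendsto (fun N => ∑ i ∈ range N, (c i : ℂ) • rankOne (ks i) x) atTop
      (nhds ((adjoint T * T - 1) x))) (m : ℕ) (x : H) :
    Tendsto
      (fun N => ∑ i ∈ range N, ((c i * (1 - ‖lam i‖ ^ 2) ^ m : ℝ) : ℂ) • rankOne (ks i) x)
      atTop (nhds (-binomialDefect ℂ (adjoint T) T (m + 1) x)) := by
  induction m generalizing x with
  | zero => simpa [binomialDefect_one] using hΔ x
  | succ m ih =>
    have hstep := tendsto_sum_rankOne_one_sub_norm_sq heig
      (B := -binomialDefect ℂ (adjoint T) T (m + 1)) ih x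
    rw [mul_neg, neg_mul, sub_neg_eq_add, neg_add_eq_sub] at hstep
    rw [binomialDefect_succ, sub_apply, neg_sub, ← sub_apply]
    simpa only [mul_assoc, pow_succ] using hstep

end RankOne

theorem stmt4 {H : Type*} [NormedAddCommGroup H] [InnerProductSpace ℂ H] [CompleteSpace H]
    (T : H →L[ℂ] H) (c : ℕ → ℝ) (hc : ∀ i, 0 < c i)
    (ks : ℕ → H) (lam : ℕ → ℂ) (hlam : ∀ i, ‖lam i‖ ≤ 1)
    (heig : ∀ i, adjoint T (ks i) = (starRingEnd ℂ) (lam i) • ks i)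
    (hΔ : ∀ x : H,
      Tendsto (fun N => ∑ i ∈ Finset.range N, (c i : ℂ) • rankOne (ks i) x) atTop
        (nhds ((adjoint T * T - 1) x))) :
    ∀ n : ℕ, 2 ≤ n →
      (∀ x : H,
        Tendsto
          (fun N => ∑ i ∈ Finset.range N,
            ((c i : ℂ) * ((1 : ℂ) - (‖lam i‖ : ℂ) ^ 2) ^ (n - 1)) • rankOne (ks i) x)
          atTop
          (nhds (-((∑ j ∈ Finset.range (n + 1),
            ((-1 : ℂ) ^ j * (Nat.choose n j : ℂ)) • ((adjoint T) ^ j * T ^ j)) x)))) ∧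
      (∀ x : H,
        (inner ℂ x ((∑ j ∈ Finset.range (n + 1),
          ((-1 : ℂ) ^ j * (Nat.choose n j : ℂ)) • ((adjoint T) ^ j * T ^ j)) x) : ℂ).re ≤ 0) := by
  intro n hn
  obtain ⟨m, rfl⟩ : ∃ m, n = m + 1 := ⟨n - 1, by omega⟩
  have hlim := tendsto_sum_rankOne_neg_binomialDefect heig hΔ m
  have hweight (i : ℕ) : 0 ≤ c i * (1 - ‖lam i‖ ^ 2) ^ m :=
    mul_nonneg (hc i).le (pow_nonneg (sub_nonneg.2 (pow_le_one₀ (norm_nonneg _) (hlam i))) m)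
  refine ⟨fun x => ?_, fun x => ?_⟩
  · simpa only [Complex.ofReal_mul, Complex.ofReal_pow, Complex.ofReal_sub, Complex.ofReal_one,
      Nat.add_sub_cancel, binomialDefect] using hlim x
  · have hneg := re_inner_nonneg_of_tendsto_sum_rankOne hweight (hlim x)
    rwa [inner_neg_right, Complex.neg_re, neg_nonneg] at hneg
end

section
/- Let T be a bounded operator on a Hilbert space H with T*ΔT ≤ Δ where Δ = T*T − I ≥ 0. Then the closure of the range of Δ is invariant under T*. -/
/-!
If `Δ y = 0`, then `⟪Δ T y, T y⟫ = ⟪T* Δ T y, y⟫ ≤ ⟪Δ y, y⟫ = 0`, and a positive operator whose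
quadratic form vanishes at a vector kills it; so `T` leaves `ker Δ` invariant. Since `Δ` is
self-adjoint, the closure of its range is `(ker Δ)ᗮ`, which is therefore invariant under `T*`.
-/

open ContinuousLinearMap

namespace ContinuousLinearMap

variable {H : Type*} [NormedAddCommGroup H] [InnerProductSpace ℂ H] [CompleteSpace H]

theorem apply_eq_zero_of_nonneg_of_inner_eq_zero {A : H →L[ℂ] H} (hA : 0 ≤ A) {x : H}
    (hx : inner ℂ (A x) x = 0) : A x = 0 := by
  obtain ⟨B, rfl⟩ := CStarAlgebra.nonneg_iff_eq_star_mul_self.mp hA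
  have hBx : B x = 0 := by
    rw [← inner_self_eq_zero (𝕜 := ℂ), ← adjoint_inner_left, ← star_eq_adjoint]
    exact hx
  simp [hBx]

open scoped ComplexOrder in
theorem ker_mem_invtSubmodule_of_adjoint_conj_le {A S : H →L[ℂ] H} (hA : 0 ≤ A)
    (h : adjoint S * A * S ≤ A) :
    (A : H →ₗ[ℂ] H).ker ∈ Module.End.invtSubmodule (S : H →ₗ[ℂ] H) := by
  refine (Module.End.mem_invtSubmodule_iff_forall_mem_of_mem _).mpr fun y (hy : A y = 0) ↦ ?_
  refine apply_eq_zero_of_nonneg_of_inner_eq_zero hA (le_antisymm ?_ ?_)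
  · simpa [sub_apply, mul_apply, hy, adjoint_inner_left] using h.inner_nonneg_left y
  · exact ((nonneg_iff_isPositive A).mp hA).inner_nonneg_left _

theorem closure_range_eq_orthogonal_ker {A : H →L[ℂ] H} (hA : IsSelfAdjoint A) :
    closure (Set.range A) = ((A : H →ₗ[ℂ] H).ker)ᗮ := by
  rw [orthogonal_ker, hA.adjoint_eq, Submodule.topologicalClosure_coe, LinearMap.coe_range]
  rfl

end ContinuousLinearMap

theorem stmt6 {H : Type*} [NormedAddCommGroup H] [InnerProductSpace ℂ H] [CompleteSpace H]
    (T : H →L[ℂ] H)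
    (hpos : (adjoint T * T - 1).IsPositive)
    (hineq : ((adjoint T * T - 1) - adjoint T * (adjoint T * T - 1) * T).IsPositive) :
    ∀ x : H, x ∈ closure (Set.range ⇑(adjoint T * T - 1)) →
      adjoint T x ∈ closure (Set.range ⇑(adjoint T * T - 1)) := by
  set Δ := adjoint T * T - 1
  have hker : (Δ : H →ₗ[ℂ] H).ker ∈ Module.End.invtSubmodule (T : H →ₗ[ℂ] H) :=
    ker_mem_invtSubmodule_of_adjoint_conj_le ((nonneg_iff_isPositive Δ).mpr hpos)
      ((le_def _ _).mpr hineq)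
  have hker_orth : (Δ : H →ₗ[ℂ] H).kerᗮ ∈ Module.End.invtSubmodule (adjoint T : H →ₗ[ℂ] H) :=
    orthogonal_mem_invtSubmodule (by rwa [adjoint_adjoint])
  rw [closure_range_eq_orthogonal_ker hpos.isSelfAdjoint]
  exact (Module.End.mem_invtSubmodule_iff_forall_mem_of_mem _).mp hker_orth
end

section
/- Define K_w(z) = (1 − (z·conj(w))·( (1/2)·z·conj(w) − z − conj(w) + 5/2 ) / ((2−z)(2−conj(w)))) / (1 − z·conj(w)) for z, w in the open unit disc. Then K is a positive semidefinite kernel on 𝔻 × 𝔻, i.e. for any finite set of points w_1, …, w_N ∈ 𝔻 and scalars a_1, …, a_N ∈ ℂ, ∑_{i,j} a_i conj(a_j) K_{w_j}(w_i) ≥ 0. -/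
open Complex

/-- The reproducing kernel of `𝒟(δ₁ + δ₀)`. -/
noncomputable def Kker (w z : ℂ) : ℂ :=
  (1 - (z * (starRingEnd ℂ) w) *
      ((1 / 2) * z * (starRingEnd ℂ) w - z - (starRingEnd ℂ) w + 5 / 2) /
      ((2 - z) * (2 - (starRingEnd ℂ) w))) / (1 - z * (starRingEnd ℂ) w)

lemma Kker_eq (z w : ℂ) (hz : (2:ℂ) - z ≠ 0) (hw : (2:ℂ) - (starRingEnd ℂ) w ≠ 0)
    (h1 : (1:ℂ) - z * (starRingEnd ℂ) w ≠ 0) :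
    Kker w z = 1/2 + (2 - z)⁻¹ * (2 - (starRingEnd ℂ) w)⁻¹
      + ((1 - z) * (2 - z)⁻¹) * ((1 - (starRingEnd ℂ) w) * (2 - (starRingEnd ℂ) w)⁻¹) *
        (1 - z * (starRingEnd ℂ) w)⁻¹ := by
  unfold Kker
  field_simp
  ring

theorem stmt10 (N : ℕ) (w : Fin N → ℂ) (hw : ∀ i, ‖w i‖ < 1) (a : Fin N → ℂ) :
    0 ≤ (∑ i, ∑ j, a i * (starRingEnd ℂ) (a j) * Kker (w j) (w i)).re ∧
      (∑ i, ∑ j, a i * (starRingEnd ℂ) (a j) * Kker (w j) (w i)).im = 0 := by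
  classical
  have h2 : ∀ i, (2:ℂ) - w i ≠ 0 := by
    intro i h
    have h' := sub_eq_zero.mp h
    have := hw i
    rw [← h'] at this
    simp at this
  have h2c : ∀ j, (2:ℂ) - (starRingEnd ℂ) (w j) ≠ 0 := by
    intro j h
    have h' := sub_eq_zero.mp h
    have : ‖(starRingEnd ℂ) (w j)‖ < 1 := by rw [RCLike.norm_conj]; exact hw j
    rw [← h'] at this
    simp at this
  have hnorm : ∀ i j, ‖w i * (starRingEnd ℂ) (w j)‖ < 1 := by
    intro i j
    rw [norm_mul, RCLike.norm_conj]
    nlinarith [norm_nonneg (w i), norm_nonneg (w j), hw i, hw j]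
  have h1 : ∀ i j, (1:ℂ) - w i * (starRingEnd ℂ) (w j) ≠ 0 := by
    intro i j h
    have h' := sub_eq_zero.mp h
    have := hnorm i j
    rw [← h'] at this
    simp at this
  set q : Fin N → ℂ := fun i => a i * (2 - w i)⁻¹ with hq
  set c : Fin N → ℂ := fun i => a i * ((1 - w i) * (2 - w i)⁻¹) with hc
  set s : ℕ → ℂ := fun n => ∑ i, c i * w i ^ n with hs
  have hpt : ∀ i j, (fun n => (c i * w i ^ n) * (starRingEnd ℂ) (c j * w j ^ n))
      = fun n => (c i * (starRingEnd ℂ) (c j)) * (w i * (starRingEnd ℂ) (w j)) ^ n := by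
    intro i j
    funext n
    simp only [map_mul, map_pow, mul_pow]
    ring
  have hsum : ∀ i j, Summable (fun n => (c i * w i ^ n) * (starRingEnd ℂ) (c j * w j ^ n)) := by
    intro i j
    rw [hpt i j]
    exact (summable_geometric_of_norm_lt_one (hnorm i j)).mul_left _
  have key : ∀ i j, a i * (starRingEnd ℂ) (a j) * Kker (w j) (w i)
      = (1/2) * (a i * (starRingEnd ℂ) (a j)) + q i * (starRingEnd ℂ) (q j)
        + ∑' n, (c i * w i ^ n) * (starRingEnd ℂ) (c j * w j ^ n) := by
    intro i j
    have e2 : (1 - w i * (starRingEnd ℂ) (w j))⁻¹ = ∑' n, (w i * (starRingEnd ℂ) (w j)) ^ n :=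
      (tsum_geometric_of_norm_lt_one (hnorm i j)).symm
    have e3 : ∑' n, (c i * w i ^ n) * (starRingEnd ℂ) (c j * w j ^ n)
        = (c i * (starRingEnd ℂ) (c j)) * (1 - w i * (starRingEnd ℂ) (w j))⁻¹ := by
      rw [hpt i j, tsum_mul_left, ← e2]
    rw [e3, Kker_eq (w i) (w j) (h2 i) (h2c j) (h1 i j), hq, hc]
    simp only [map_mul, map_inv₀, map_sub, map_one, map_ofNat]
    ring
  have key2 : (∑ i, ∑ j, a i * (starRingEnd ℂ) (a j) * Kker (w j) (w i))
      = (1/2) * ((∑ i, a i) * (starRingEnd ℂ) (∑ j, a j))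
        + (∑ i, q i) * (starRingEnd ℂ) (∑ j, q j)
        + ∑' n, s n * (starRingEnd ℂ) (s n) := by
    have ha : (∑ i, a i) * (starRingEnd ℂ) (∑ j, a j) = ∑ i, ∑ j, a i * (starRingEnd ℂ) (a j) := by
      rw [map_sum, Finset.sum_mul_sum]
    have hqq : (∑ i, q i) * (starRingEnd ℂ) (∑ j, q j) = ∑ i, ∑ j, q i * (starRingEnd ℂ) (q j) := by
      rw [map_sum, Finset.sum_mul_sum]
    have hswap : ∑' n, s n * (starRingEnd ℂ) (s n)
        = ∑ i, ∑ j, ∑' n, (c i * w i ^ n) * (starRingEnd ℂ) (c j * w j ^ n) := by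
      have hterm : ∀ n : ℕ, s n * (starRingEnd ℂ) (s n)
          = ∑ i, ∑ j, (c i * w i ^ n) * (starRingEnd ℂ) (c j * w j ^ n) := by
        intro n
        rw [hs]
        rw [map_sum, Finset.sum_mul_sum]
      rw [tsum_congr hterm]
      rw [Summable.tsum_finsetSum (fun i _ => summable_sum (fun j _ => hsum i j))]
      exact Finset.sum_congr rfl (fun i _ => Summable.tsum_finsetSum (fun j _ => hsum i j))
    rw [ha, hqq, hswap]
    simp only [key]
    simp only [Finset.sum_add_distrib, Finset.mul_sum]
  have hFs : Summable (fun n => s n * (starRingEnd ℂ) (s n)) := by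
    have he : (fun n => s n * (starRingEnd ℂ) (s n))
        = fun n => ∑ i, ∑ j, (c i * w i ^ n) * (starRingEnd ℂ) (c j * w j ^ n) := by
      funext n; rw [hs, map_sum, Finset.sum_mul_sum]
    rw [he]
    exact summable_sum (fun i _ => summable_sum (fun j _ => hsum i j))
  have hcast : ∀ (x : ℝ), (1/2 : ℂ) * ((x : ℝ) : ℂ) = ((x/2 : ℝ) : ℂ) := by
    intro x; push_cast; ring
  have htre : (∑' n, s n * (starRingEnd ℂ) (s n)).re = ∑' n, (s n * (starRingEnd ℂ) (s n)).re := by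
    have := Complex.reCLM.map_tsum hFs
    simpa using this
  have htim : (∑' n, s n * (starRingEnd ℂ) (s n)).im = ∑' n, (s n * (starRingEnd ℂ) (s n)).im := by
    have := Complex.imCLM.map_tsum hFs
    simpa using this
  constructor
  · rw [key2]
    simp only [Complex.add_re]
    rw [htre, Complex.mul_conj, Complex.mul_conj, hcast, Complex.ofReal_re, Complex.ofReal_re]
    have t3 : 0 ≤ ∑' n, (s n * (starRingEnd ℂ) (s n)).re := by
      apply tsum_nonneg
      intro n
      rw [Complex.mul_conj, Complex.ofReal_re]
      exact Complex.normSq_nonneg _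
    have := Complex.normSq_nonneg (∑ i, a i)
    have := Complex.normSq_nonneg (∑ i, q i)
    positivity
  · rw [key2]
    simp only [Complex.add_im]
    rw [htim, Complex.mul_conj, Complex.mul_conj, hcast, Complex.ofReal_im, Complex.ofReal_im]
    have t3 : ∑' n, (s n * (starRingEnd ℂ) (s n)).im = 0 := by
      have : ∀ n : ℕ, (s n * (starRingEnd ℂ) (s n)).im = 0 := by
        intro n; rw [Complex.mul_conj, Complex.ofReal_im]
      rw [tsum_congr this, tsum_zero]
    rw [t3]
    ring
end

section
/- Let P(z) = 1/(1−z)² + 1/(1−conj(z))² − 1 for z in the open unit disc 𝔻. Then ∫_𝔻 |P(z)| dA(z) = +∞, i.e. P is not absolutely integrable over 𝔻 with respect to area measure. -/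
/-!
With `w = 1 - z`, `P(z) = 2 Re (1 / w²) - 1` is real. On the sector `|Im w| ≤ Re w / 3` one has
`Re (1 / w²) ≥ (18/25) / (Re w)²`, so `|P| ≥ (Re w)⁻²` once `Re w < 1/2`. Integrating first over the
vertical segments of the sector, of length `(2/3) Re w`, leaves `∫₀^{1/2} da / a = ∞`.
-/

open Complex MeasureTheory Set
open scoped ENNReal

theorem lintegral_Ioo_inv_eq_top {r : ℝ} (hr : 0 < r) :
    ∫⁻ x in Ioo 0 r, ENNReal.ofReal x⁻¹ = ⊤ := by
  by_contra h
  have hint : IntegrableOn (fun x : ℝ => x⁻¹) (Ioo 0 r) := by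
    refine (lintegral_ofReal_ne_top_iff_integrable (by fun_prop) ?_).1 h
    filter_upwards [ae_restrict_mem measurableSet_Ioo] with x hx
    exact inv_nonneg.2 hx.1.le
  have := (intervalIntegrable_iff_integrableOn_Ioo_of_le hr.le).2 hint
  simp [intervalIntegrable_inv_iff, hr.ne] at this

theorem setLIntegral_regionBetween_comp_fst {α : Type*} [MeasurableSpace α] {μ : Measure α}
    [SFinite μ] {f g : α → ℝ} {s : Set α} (hf : Measurable f) (hg : Measurable g)
    (hs : MeasurableSet s) {F : α → ℝ≥0∞} (hF : Measurable F) :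
    ∫⁻ p in regionBetween f g s, F p.1 ∂(μ.prod volume) =
      ∫⁻ x in s, F x * ENNReal.ofReal (g x - f x) ∂μ := by
  rw [← withDensity_apply _ (measurableSet_regionBetween hf hg hs), ← prod_withDensity_left hF,
    volume_regionBetween_eq_lintegral' hf hg hs, setLIntegral_withDensity_eq_setLIntegral_mul _ hF
      (by fun_prop) hs]
  rfl

theorem lintegral_regionBetween_inv_sq_eq_top {c r : ℝ} (hc : 0 < c) (hr : 0 < r) :
    ∫⁻ p in regionBetween (fun a => -(c * a)) (fun a => c * a) (Ioo 0 r),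
      ENNReal.ofReal (p.1 ^ 2)⁻¹ = ⊤ := by
  rw [Measure.volume_eq_prod,
    setLIntegral_regionBetween_comp_fst (F := fun a => ENNReal.ofReal (a ^ 2)⁻¹)
      (by fun_prop) (by fun_prop) measurableSet_Ioo (by fun_prop)]
  have hcongr : EqOn (fun a : ℝ => ENNReal.ofReal (a ^ 2)⁻¹ * ENNReal.ofReal (c * a - -(c * a)))
      (fun a => ENNReal.ofReal (2 * c) * ENNReal.ofReal a⁻¹) (Ioo 0 r) := by
    intro a ha
    have ha : 0 < a := ha.1
    dsimp only
    rw [← ENNReal.ofReal_mul (by positivity), ← ENNReal.ofReal_mul (by positivity)]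
    congr 1
    field_simp
    ring
  rw [setLIntegral_congr_fun measurableSet_Ioo hcongr, lintegral_const_mul _ (by fun_prop),
    lintegral_Ioo_inv_eq_top hr, ENNReal.mul_top (by simpa using hc)]

theorem le_re_one_div_sq {w : ℂ} (hre : 0 < w.re) (him : |w.im| ≤ w.re / 3) :
    18 / (25 * w.re ^ 2) ≤ (1 / w ^ 2).re := by
  have hre_eq : (1 / w ^ 2).re = (w.re ^ 2 - w.im ^ 2) / (w.re ^ 2 + w.im ^ 2) ^ 2 := by
    rw [one_div, inv_re, normSq_apply]
    simp only [pow_two, mul_re, mul_im]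
    ring
  have him_sq : w.im ^ 2 ≤ w.re ^ 2 / 9 := by
    have := sq_le_sq' (abs_le.1 him).1 (abs_le.1 him).2
    linarith
  rw [hre_eq, div_le_div_iff₀ (by positivity) (by positivity)]
  nlinarith [mul_nonneg (by linarith : 0 ≤ w.re ^ 2 - 9 * w.im ^ 2)
    (by positivity : 0 ≤ 7 * w.re ^ 2 + 2 * w.im ^ 2)]

theorem two_mul_re_one_div_sq_sub_one_le_norm (u : ℂ) :
    2 * (1 / u ^ 2).re - 1 ≤ ‖1 / u ^ 2 + 1 / (starRingEnd ℂ u) ^ 2 - 1‖ := by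
  have : (1 / u ^ 2 + 1 / (starRingEnd ℂ u) ^ 2 - 1).re = 2 * (1 / u ^ 2).re - 1 := by
    rw [show 1 / starRingEnd ℂ u ^ 2 = starRingEnd ℂ (1 / u ^ 2) by simp]
    simp only [sub_re, add_re, conj_re, one_re]
    ring
  exact this ▸ re_le_norm _

theorem inv_re_sq_le_norm {u : ℂ} (hre : u.re ∈ Ioo 0 (1 / 2)) (him : |u.im| ≤ u.re / 3) :
    (u.re ^ 2)⁻¹ ≤ ‖1 / u ^ 2 + 1 / (starRingEnd ℂ u) ^ 2 - 1‖ := by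
  have hsq_pos : 0 < u.re ^ 2 := pow_pos hre.1 2
  have hsq_lt : u.re ^ 2 < 1 / 4 := by nlinarith [hre.1, hre.2]
  calc (u.re ^ 2)⁻¹ ≤ 2 * (18 / (25 * u.re ^ 2)) - 1 := by
        rw [inv_eq_one_div, le_sub_iff_add_le, mul_div_assoc', div_add_one hsq_pos.ne',
          div_le_div_iff₀ hsq_pos (mul_pos (by norm_num) hsq_pos)]
        nlinarith
    _ ≤ 2 * (1 / u ^ 2).re - 1 := by gcongr; exact le_re_one_div_sq hre.1 him
    _ ≤ _ := two_mul_re_one_div_sq_sub_one_le_norm u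

theorem norm_one_sub_lt_one {u : ℂ} (hre : u.re ∈ Ioo 0 (1 / 2)) (him : |u.im| ≤ u.re / 3) :
    ‖1 - u‖ < 1 := by
  rw [← sq_lt_one_iff₀ (norm_nonneg _), Complex.sq_norm, normSq_apply]
  simp only [sub_re, one_re, sub_im, one_im, zero_sub, neg_mul_neg]
  nlinarith [hre.1, hre.2, sq_abs u.im, abs_nonneg u.im]

theorem stmt13 :
    ∫⁻ z in Metric.ball (0 : ℂ) 1,
        ENNReal.ofReal ‖1 / (1 - z) ^ 2 + 1 / (1 - (starRingEnd ℂ) z) ^ 2 - 1‖ = ⊤ := by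
  let φ : ℂ ≃ᵐ ℝ × ℝ := (MeasurableEquiv.subLeft (1 : ℂ)).trans measurableEquivRealProd
  have hφ : MeasurePreserving φ :=
    volume_preserving_equiv_real_prod.comp (Measure.measurePreserving_sub_left volume 1)
  set W := regionBetween (fun a => -(1 / 3 * a)) (fun a => 1 / 3 * a) (Ioo (0 : ℝ) (1 / 2))
  have hW : ∀ z ∈ φ ⁻¹' W, (1 - z).re ∈ Ioo 0 (1 / 2) ∧ |(1 - z).im| ≤ (1 - z).re / 3 :=
    fun z ⟨hre, him⟩ => by
      change (1 - z).im ∈ Ioo (-(1 / 3 * (1 - z).re)) (1 / 3 * (1 - z).re) at him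
      exact ⟨hre, abs_le.2 ⟨by linarith [him.1], by linarith [him.2]⟩⟩
  have hball : φ ⁻¹' W ⊆ Metric.ball 0 1 := fun z hz => by
    simpa using norm_one_sub_lt_one (hW z hz).1 (hW z hz).2
  refine eq_top_iff.2 <| calc ⊤ = ∫⁻ p in W, ENNReal.ofReal (p.1 ^ 2)⁻¹ :=
        (lintegral_regionBetween_inv_sq_eq_top (by norm_num) (by norm_num)).symm
    _ = ∫⁻ z in φ ⁻¹' W, ENNReal.ofReal ((1 - z).re ^ 2)⁻¹ :=
        (hφ.setLIntegral_comp_preimage_emb φ.measurableEmbedding _ _).symm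
    _ ≤ ∫⁻ z in φ ⁻¹' W,
          ENNReal.ofReal ‖1 / (1 - z) ^ 2 + 1 / (1 - (starRingEnd ℂ) z) ^ 2 - 1‖ := by
        refine setLIntegral_mono' (φ.measurable
          (measurableSet_regionBetween (by fun_prop) (by fun_prop) measurableSet_Ioo)) fun z hz => ?_
        have := inv_re_sq_le_norm (hW z hz).1 (hW z hz).2
        rw [map_sub, map_one] at this
        exact ENNReal.ofReal_le_ofReal this
    _ ≤ _ := lintegral_mono_set hball
end

section
/- Let h(z) = log(1+z) (principal branch) on the open unit disc 𝔻. Then h ∈ H², but ∫_𝔻 |(z−1) h'''(z)|² (1−|z|²)³ dA(z) = +∞. -/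
/-!
The Taylor coefficients of `log (1 + r z)` are `(-1)ⁿ⁺¹ rⁿ / n`, so by Parseval its mean square
on the unit circle is `∑ r²ⁿ / n² ≤ π² / 6`, uniformly in `r < 1`.

For the area integral, on the disc of radius `x / 2` about `x - 1` we have `|1 + z| < 3x/2`,
`1 - |z|² > x/2` and `|z - 1| ≥ 1`, so the integrand is at least `1 / (32 x³)` on a set of area
`π x² / 4`; the integral is therefore at least `π / (128 x)` for every small `x > 0`.
-/

open Complex MeasureTheory Real Filter Topology Metric

theorem tendsto_circleAverage_of_dominated_convergence {E ι : Type*} [NormedAddCommGroup E]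
    [NormedSpace ℝ E] {l : Filter ι} [l.IsCountablyGenerated] {F : ι → ℂ → E} {f : ℂ → E}
    {c : ℂ} {R M : ℝ}
    (hF : ∀ i, CircleIntegrable (F i) c R) (hbound : ∀ i, ∀ z ∈ sphere c |R|, ‖F i z‖ ≤ M)
    (hlim : ∀ z ∈ sphere c |R|, Tendsto (fun i ↦ F i z) l (𝓝 (f z))) :
    Tendsto (fun i ↦ circleAverage (F i) c R) l (𝓝 (circleAverage f c R)) := by
  simp only [circleAverage_def]
  refine (intervalIntegral.tendsto_integral_filter_of_dominated_convergence (fun _ ↦ M)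
    (.of_forall fun i ↦ (hF i).aestronglyMeasurable_restrict_uIoc) (.of_forall fun i ↦ ?_)
    intervalIntegrable_const (.of_forall fun θ _ ↦ ?_)).const_smul _
  · exact .of_forall fun θ _ ↦ hbound i _ (circleMap_mem_sphere' c R θ)
  · exact hlim _ (circleMap_mem_sphere' c R θ)

open Polynomial PowerSeries in
theorem circleAverage_norm_sq_eval_trunc (a : ℕ → ℂ) (N : ℕ) :
    circleAverage (fun z ↦ ‖(trunc N (mk a)).eval z‖ ^ 2) 0 1 =
      ∑ n ∈ Finset.range N, ‖a n‖ ^ 2 := by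
  rw [← sum_sq_norm_coeff_eq_circleAverage]
  refine Finset.sum_subset (fun n hn ↦ ?_) (fun n _ hn ↦ by simp [notMem_support_iff.mp hn])
    |>.trans (Finset.sum_congr rfl fun n hn ↦ ?_)
  · by_contra h
    simp_all [coeff_trunc]
  · simp [coeff_trunc, Finset.mem_range.mp hn]

open Polynomial in
theorem circleAverage_norm_sq_eq_tsum_norm_sq {a : ℕ → ℂ} {f : ℂ → ℂ}
    (ha : Summable fun n ↦ ‖a n‖)
    (hf : ∀ z ∈ sphere (0 : ℂ) 1, HasSum (fun n ↦ a n * z ^ n) (f z)) :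
    circleAverage (fun z ↦ ‖f z‖ ^ 2) 0 1 = ∑' n, ‖a n‖ ^ 2 := by
  set p : ℕ → ℂ[X] := fun N ↦ PowerSeries.trunc N (PowerSeries.mk a)
  have heval (N : ℕ) (z : ℂ) : (p N).eval z = ∑ n ∈ Finset.range N, a n * z ^ n := by
    simp [p, eval, PowerSeries.eval₂_trunc_eq_sum_range]
  have hsq : Summable fun n ↦ ‖a n‖ ^ 2 :=
    (ha.mul_left (∑' n, ‖a n‖)).of_nonneg_of_le (fun _ ↦ by positivity)
      fun n ↦ by rw [sq]; gcongr; exact ha.le_tsum n fun _ _ ↦ norm_nonneg _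
  have hbound (N : ℕ) (z : ℂ) (hz : z ∈ sphere (0 : ℂ) |1|) :
      ‖‖(p N).eval z‖ ^ 2‖ ≤ (∑' n, ‖a n‖) ^ 2 := by
    rw [abs_one, mem_sphere_zero_iff_norm] at hz
    rw [norm_pow, norm_norm, heval]
    gcongr
    refine (norm_sum_le _ _).trans ?_
    simpa [hz] using ha.sum_le_tsum (Finset.range N) fun _ _ ↦ norm_nonneg _
  have hlim : Tendsto (fun N ↦ circleAverage (fun z ↦ ‖(p N).eval z‖ ^ 2) 0 1) atTop
      (𝓝 (circleAverage (fun z ↦ ‖f z‖ ^ 2) 0 1)) := by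
    refine tendsto_circleAverage_of_dominated_convergence (fun N ↦ ?_) hbound fun z hz ↦ ?_
    · exact (by fun_prop : Continuous fun z ↦ ‖(p N).eval z‖ ^ 2).continuousOn.circleIntegrable'
    · rw [abs_one] at hz
      simp only [heval]
      exact ((hf z hz).tendsto_sum_nat.norm).pow 2
  simp only [p, circleAverage_norm_sq_eval_trunc] at hlim
  exact tendsto_nhds_unique hlim hsq.hasSum.tendsto_sum_nat

theorem circleAverage_norm_log_one_add_mul_sq {w : ℂ} (hw : ‖w‖ < 1) :
    circleAverage (fun z ↦ ‖log (1 + w * z)‖ ^ 2) 0 1 = ∑' n : ℕ, ‖w‖ ^ (2 * n) / n ^ 2 := by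
  have hnorm (n : ℕ) : ‖(-1) ^ (n + 1) * w ^ n / n‖ = ‖w‖ ^ n / n := by simp
  have hsum : Summable fun n : ℕ ↦ ‖(-1) ^ (n + 1) * w ^ n / n‖ := by
    refine (summable_geometric_of_lt_one (norm_nonneg w) hw).of_nonneg_of_le
      (fun _ ↦ norm_nonneg _) fun n ↦ ?_
    rcases n.eq_zero_or_pos with rfl | hn
    · simp
    · rw [hnorm]
      exact div_le_self (by positivity) (by exact_mod_cast hn)
  rw [circleAverage_norm_sq_eq_tsum_norm_sq hsum fun z hz ↦ ?_]
  · simp_rw [hnorm, div_pow, pow_mul']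
  · rw [mem_sphere_zero_iff_norm] at hz
    convert hasSum_taylorSeries_log (z := w * z) (by simpa [hz]) using 2
    ring

theorem circleAverage_norm_log_one_add_mul_sq_le {w : ℂ} (hw : ‖w‖ < 1) :
    circleAverage (fun z ↦ ‖log (1 + w * z)‖ ^ 2) 0 1 ≤ π ^ 2 / 6 := by
  rw [circleAverage_norm_log_one_add_mul_sq hw, ← hasSum_zeta_two.tsum_eq]
  have hle (n : ℕ) : ‖w‖ ^ (2 * n) / n ^ 2 ≤ 1 / n ^ 2 := by
    gcongr
    exact pow_le_one₀ (norm_nonneg w) hw.le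
  exact Summable.tsum_le_tsum hle (hasSum_zeta_two.summable.of_nonneg_of_le
    (fun _ ↦ by positivity) hle) hasSum_zeta_two.summable

theorem inv_le_weighted_third_deriv_sq {x : ℝ} (hx : 0 < x) (hx' : x ≤ 1 / 2) {z : ℂ}
    (hz : z ∈ ball ((x : ℂ) - 1) (x / 2)) :
    1 / (32 * x ^ 3) ≤ ‖(z - 1) * (2 / (1 + z) ^ 3)‖ ^ 2 * (1 - ‖z‖ ^ 2) ^ 3 := by
  rw [mem_ball] at hz
  have hdist_neg_one : dist ((x : ℂ) - 1) (-1) = x := by simp [dist_eq_norm, abs_of_pos hx]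
  have hdist_zero : dist ((x : ℂ) - 1) 0 = 1 - x := by
    rw [dist_zero_right, show (x : ℂ) - 1 = ((x - 1 : ℝ) : ℂ) by push_cast; rfl, norm_real,
      Real.norm_eq_abs, abs_of_neg (by linarith), neg_sub]
  have hdist_one : dist ((x : ℂ) - 1) 1 = 2 - x := by
    rw [dist_eq_norm, show (x : ℂ) - 1 - 1 = ((x - 2 : ℝ) : ℂ) by push_cast; ring, norm_real,
      Real.norm_eq_abs, abs_of_neg (by linarith), neg_sub]
  have h_one_add : ‖1 + z‖ < 3 * x / 2 := by
    rw [add_comm, ← sub_neg_eq_add, ← dist_eq_norm]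
    linarith [dist_triangle z ((x : ℂ) - 1) (-1)]
  have h_one_add_pos : 0 < ‖1 + z‖ := by
    rw [add_comm, ← sub_neg_eq_add, ← dist_eq_norm]
    linarith [dist_triangle_left ((x : ℂ) - 1) (-1) z]
  have h_norm : ‖z‖ < 1 - x / 2 := by
    rw [← dist_zero_right]
    linarith [dist_triangle z ((x : ℂ) - 1) 0]
  have h_sub_one : 1 ≤ ‖z - 1‖ := by
    rw [← dist_eq_norm]
    linarith [dist_triangle_left ((x : ℂ) - 1) 1 z]
  have h_weight : x / 2 ≤ 1 - ‖z‖ ^ 2 := by nlinarith [norm_nonneg z]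
  rw [norm_mul, norm_div, norm_pow, Complex.norm_two, mul_pow, div_pow]
  calc 1 / (32 * x ^ 3) ≤ 1 ^ 2 * (2 ^ 2 / (3 * x / 2) ^ (3 * 2)) * (x / 2) ^ 3 := by
        rw [div_le_iff₀ (by positivity)]
        field_simp
        nlinarith [pow_pos hx 6]
    _ ≤ ‖z - 1‖ ^ 2 * (2 ^ 2 / (‖1 + z‖ ^ 3) ^ 2) * (1 - ‖z‖ ^ 2) ^ 3 := by
        rw [← pow_mul]
        gcongr

theorem ofReal_le_lintegral_weighted_third_deriv_sq {x : ℝ} (hx : 0 < x) (hx' : x ≤ 1 / 2) :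
    ENNReal.ofReal (π / 128 * x⁻¹) ≤ ∫⁻ z in ball (0 : ℂ) 1,
        ENNReal.ofReal (‖(z - 1) * (2 / (1 + z) ^ 3)‖ ^ 2 * (1 - ‖z‖ ^ 2) ^ 3) := by
  have hsub : ball ((x : ℂ) - 1) (x / 2) ⊆ ball 0 1 := by
    refine ball_subset_ball' ?_
    rw [dist_zero_right, show (x : ℂ) - 1 = ((x - 1 : ℝ) : ℂ) by push_cast; rfl, norm_real,
      Real.norm_eq_abs, abs_of_neg (by linarith)]
    linarith
  calc ENNReal.ofReal (π / 128 * x⁻¹)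
      = ENNReal.ofReal (1 / (32 * x ^ 3)) * volume (ball ((x : ℂ) - 1) (x / 2)) := by
        rw [Complex.volume_ball, ← ENNReal.ofReal_pow (by positivity), ← ENNReal.ofReal_coe_nnreal,
          NNReal.coe_real_pi, ← ENNReal.ofReal_mul (by positivity),
          ← ENNReal.ofReal_mul (by positivity)]
        congr 1
        field_simp
        ring
    _ = ∫⁻ _ in ball ((x : ℂ) - 1) (x / 2), ENNReal.ofReal (1 / (32 * x ^ 3)) :=
        (setLIntegral_const _ _).symm
    _ ≤ ∫⁻ z in ball ((x : ℂ) - 1) (x / 2),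
          ENNReal.ofReal (‖(z - 1) * (2 / (1 + z) ^ 3)‖ ^ 2 * (1 - ‖z‖ ^ 2) ^ 3) :=
        setLIntegral_mono (by fun_prop) fun z hz ↦
          ENNReal.ofReal_le_ofReal (inv_le_weighted_third_deriv_sq hx hx' hz)
    _ ≤ _ := lintegral_mono_set hsub

theorem lintegral_weighted_third_deriv_sq_eq_top :
    ∫⁻ z in ball (0 : ℂ) 1,
        ENNReal.ofReal (‖(z - 1) * (2 / (1 + z) ^ 3)‖ ^ 2 * (1 - ‖z‖ ^ 2) ^ 3) = ⊤ := by
  have hlim : Tendsto (fun x : ℝ ↦ ENNReal.ofReal (π / 128 * x⁻¹)) (𝓝[>] 0) (𝓝 ⊤) :=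
    ENNReal.tendsto_ofReal_atTop.comp
      (tendsto_inv_nhdsGT_zero.const_mul_atTop (by positivity))
  refine top_le_iff.mp (le_of_tendsto hlim ?_)
  filter_upwards [Ioc_mem_nhdsGT (by norm_num : (0 : ℝ) < 1 / 2)] with x hx
  exact ofReal_le_lintegral_weighted_third_deriv_sq hx.1 hx.2

theorem stmt14 :
    -- `h(z) = log(1+z)` belongs to the Hardy space `H²` ...
    (∃ C : ℝ, ∀ r : ℝ, 0 < r → r < 1 →
      (∫ θ in (0 : ℝ)..(2 * π),
          ‖Complex.log (1 + (r : ℂ) * Complex.exp (θ * Complex.I))‖ ^ 2) / (2 * π) ≤ C) ∧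
    -- ... but `∫_𝔻 |(z−1) h'''(z)|² (1−|z|²)³ dA(z) = +∞`, where `h'''(z) = 2/(1+z)³`.
    (∫⁻ z in Metric.ball (0 : ℂ) 1,
        ENNReal.ofReal (‖(z - 1) * (2 / (1 + z) ^ 3)‖ ^ 2 * (1 - ‖z‖ ^ 2) ^ 3) = ⊤) := by
  refine ⟨⟨π ^ 2 / 6, fun r hr₀ hr₁ ↦ ?_⟩, lintegral_weighted_third_deriv_sq_eq_top⟩
  have hr : ‖(r : ℂ)‖ < 1 := by rwa [norm_real, Real.norm_of_nonneg hr₀.le]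
  convert circleAverage_norm_log_one_add_mul_sq_le hr using 1
  simp [circleAverage_def, circleMap, div_eq_inv_mul]
end
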